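/- arXiv:1907.04555 — 3 statements merged into one kernel-verified Lean document; each statement's English description precedes it below -/
import Mathlib

section
/- Under the discretized (Galerkin) piezoelectric setting: for every T > 0, every continuous f : ℝ → ℝⁿ, every continuous g : ℝ → ℝᵏ, and every pair of initial data u₀, u₁ ∈ ℝⁿ, there exists exactly one pair (u, φ) with u : ℝ → ℝⁿ twice continuously differentiable on [0, T] and φ : ℝ → ℝᵏ continuous on [0, T] such that for all t ∈ [0, T]: M u''(t) + α M u'(t) + K u(t) + β K u'(t) + C φ(t) = f(t), Cᵀ u(t) − A φ(t) = g(t), u(0) = u₀, and u'(0) = u₁. -/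
/-!
Since `A` is invertible, the constraint determines the potential, `φ = A⁻¹ (Cᵀ u - g)`.
Substituting it into the balance equation and multiplying by `M⁻¹` leaves the linear
second-order system `u'' + M⁻¹ (α M + β K) u' + M⁻¹ (K + C A⁻¹ Cᵀ) u = M⁻¹ (f + C A⁻¹ g)`.
Written as a first-order system `x' = B x + h` in `x = (u, u')`, it has the global solution
`x t = exp (t B) (x 0 + ∫₀ᵗ exp (-s B) h s ds)`, and solutions are unique on `[0, T]` because the
right-hand side is Lipschitz in `x`.
-/

open MeasureTheory Matrix Set Filter

/-- The pair `(u, φ)` (with first and second derivatives `u'`, `u''` of `u`) solves the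
discretized (Galerkin) piezoelectric system with mass matrix `M`, stiffness matrix `K`,
dielectric matrix `A`, piezoelectric coupling matrix `C`, Rayleigh damping parameters
`α, β` and forcing terms `f, g` on the time set `I`. -/
def PiezoSolves {n k : ℕ} (M K : Matrix (Fin n) (Fin n) ℝ)
    (A : Matrix (Fin k) (Fin k) ℝ) (C : Matrix (Fin n) (Fin k) ℝ)
    (α β : ℝ) (f : ℝ → Fin n → ℝ) (g : ℝ → Fin k → ℝ)
    (u u' u'' : ℝ → Fin n → ℝ) (φ : ℝ → Fin k → ℝ) (I : Set ℝ) : Prop :=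
  (∀ t ∈ I, HasDerivAt u (u' t) t) ∧
  (∀ t ∈ I, HasDerivAt u' (u'' t) t) ∧
  (∀ t ∈ I,
    M.mulVec (u'' t) + α • M.mulVec (u' t) + K.mulVec (u t)
      + β • K.mulVec (u' t) + C.mulVec (φ t) = f t) ∧
  (∀ t ∈ I, Cᵀ.mulVec (u t) - A.mulVec (φ t) = g t)

section LinearODE

variable {E : Type*} [NormedAddCommGroup E] [NormedSpace ℝ E]

open NormedSpace in
theorem exists_forall_hasDerivAt_clm_apply_add [CompleteSpace E] (B : E →L[ℝ] E) {h : ℝ → E}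
    (hh : Continuous h) (x₀ : E) :
    ∃ x : ℝ → E, x 0 = x₀ ∧ ∀ t, HasDerivAt x (B (x t) + h t) t := by
  -- the lemmas on `exp` are stated for normed `ℚ`-algebras
  let : NormedAlgebra ℚ (E →L[ℝ] E) := NormedAlgebra.restrictScalars ℚ ℝ _
  have hint : Continuous fun s : ℝ => exp ((-s) • B) (h s) :=
    (exp_continuous.comp (continuous_neg.smul continuous_const)).clm_apply hh
  have hexp_neg : ∀ t : ℝ, exp (t • B) * exp ((-t) • B) = 1 := fun t => by
    rw [← exp_add_of_commute (((Commute.refl B).smul_left t).smul_right (-t)), ← add_smul,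
      add_neg_cancel, zero_smul, exp_zero]
  refine ⟨fun t => exp (t • B) (x₀ + ∫ s in (0 : ℝ)..t, exp ((-s) • B) (h s)), by simp,
    fun t => ?_⟩
  convert (hasDerivAt_exp_smul_const' B t).clm_apply
    ((hint.integral_hasStrictDerivAt 0 t).hasDerivAt.const_add x₀) using 1
  rw [mul_apply_eq_comp, ← mul_apply_eq_comp (exp (t • B)), hexp_neg, one_apply_eq_self]

theorem eqOn_Icc_of_hasDerivAt_clm_apply_add (B : E →L[ℝ] E) (h : ℝ → E) {x y : ℝ → E}
    {a b : ℝ} (hx : ∀ t ∈ Icc a b, HasDerivAt x (B (x t) + h t) t)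
    (hy : ∀ t ∈ Icc a b, HasDerivAt y (B (y t) + h t) t) (hxy : x a = y a) :
    EqOn x y (Icc a b) := by
  have hlip (t : ℝ) : LipschitzOnWith (1 * ‖B‖₊) (fun z => B z + h t) univ :=
    ((isometry_add_right (h t)).lipschitz.comp B.lipschitz).lipschitzOnWith
  exact ODE_solution_unique_of_mem_Icc_right (fun t _ => hlip t)
    (fun t ht => (hx t ht).continuousAt.continuousWithinAt)
    (fun t ht => (hx t (Ico_subset_Icc_self ht)).hasDerivWithinAt) (fun _ _ => mem_univ _)
    (fun t ht => (hy t ht).continuousAt.continuousWithinAt)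
    (fun t ht => (hy t (Ico_subset_Icc_self ht)).hasDerivWithinAt) (fun _ _ => mem_univ _) hxy

def ContinuousLinearMap.companion (S D : E →L[ℝ] E) : E × E →L[ℝ] E × E :=
  (ContinuousLinearMap.snd ℝ E E).prod
    (-(S.comp (ContinuousLinearMap.fst ℝ E E)) - D.comp (ContinuousLinearMap.snd ℝ E E))

@[simp]
theorem ContinuousLinearMap.companion_apply (S D : E →L[ℝ] E) (p : E × E) :
    S.companion D p = (p.2, -S p.1 - D p.2) :=
  rfl

theorem hasDerivAt_prodMk_companion_iff (S D : E →L[ℝ] E) (h : ℝ → E) {x x' : ℝ → E} {t : ℝ} :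
    HasDerivAt (fun s => (x s, x' s)) (S.companion D (x t, x' t) + (0, h t)) t ↔
      HasDerivAt x (x' t) t ∧ HasDerivAt x' (h t - S (x t) - D (x' t)) t := by
  have hval : S.companion D (x t, x' t) + (0, h t) = (x' t, h t - S (x t) - D (x' t)) := by
    simp only [ContinuousLinearMap.companion_apply, Prod.mk_add_mk, add_zero]
    congr 1
    abel
  rw [hval]
  refine ⟨fun hd => ⟨?_, ?_⟩, fun hd => hd.1.prodMk hd.2⟩
  · simpa using hd.hasFDerivAt.fst.hasDerivAt
  · simpa using hd.hasFDerivAt.snd.hasDerivAt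

theorem exists_forall_hasDerivAt_second_order [CompleteSpace E] (S D : E →L[ℝ] E) {h : ℝ → E}
    (hh : Continuous h) (x₀ x₁ : E) :
    ∃ x x' : ℝ → E, x 0 = x₀ ∧ x' 0 = x₁ ∧
      ∀ t, HasDerivAt x (x' t) t ∧ HasDerivAt x' (h t - S (x t) - D (x' t)) t := by
  obtain ⟨p, hp₀, hp⟩ := exists_forall_hasDerivAt_clm_apply_add (S.companion D)
    (continuous_const.prodMk hh) (x₀, x₁)
  exact ⟨fun t => (p t).1, fun t => (p t).2, congrArg Prod.fst hp₀, congrArg Prod.snd hp₀,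
    fun t => (hasDerivAt_prodMk_companion_iff S D h).1 (hp t)⟩

theorem eqOn_Icc_of_hasDerivAt_second_order (S D : E →L[ℝ] E) (h : ℝ → E) {x x' y y' : ℝ → E}
    {a b : ℝ}
    (hx : ∀ t ∈ Icc a b, HasDerivAt x (x' t) t ∧ HasDerivAt x' (h t - S (x t) - D (x' t)) t)
    (hy : ∀ t ∈ Icc a b, HasDerivAt y (y' t) t ∧ HasDerivAt y' (h t - S (y t) - D (y' t)) t)
    (h₀ : x a = y a) (h₁ : x' a = y' a) :
    EqOn x y (Icc a b) := fun t ht =>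
  congrArg Prod.fst <| eqOn_Icc_of_hasDerivAt_clm_apply_add (S.companion D) (fun s => (0, h s))
    (fun t ht => (hasDerivAt_prodMk_companion_iff S D h).2 (hx t ht))
    (fun t ht => (hasDerivAt_prodMk_companion_iff S D h).2 (hy t ht))
    (by rw [h₀, h₁]) ht

end LinearODE

theorem Matrix.mulVec_eq_iff_eq_nonsing_inv_mulVec {m R : Type*} [Fintype m] [DecidableEq m]
    [CommRing R] {A : Matrix m m R} (hA : IsUnit A.det) {y z : m → R} :
    A *ᵥ y = z ↔ y = A⁻¹ *ᵥ z := by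
  constructor <;> rintro rfl
  · rw [mulVec_mulVec, nonsing_inv_mul A hA, one_mulVec]
  · rw [mulVec_mulVec, mul_nonsing_inv A hA, one_mulVec]

theorem piezo_equations_iff {m l : Type*} [Fintype m] [DecidableEq m] [Fintype l]
    [DecidableEq l] {M K : Matrix m m ℝ} {A : Matrix l l ℝ} {C : Matrix m l ℝ} {α β : ℝ}
    (hM : IsUnit M.det) (hA : IsUnit A.det) {a b x F : m → ℝ} {y G : l → ℝ} :
    (M *ᵥ a + α • M *ᵥ b + K *ᵥ x + β • K *ᵥ b + C *ᵥ y = F ∧ Cᵀ *ᵥ x - A *ᵥ y = G) ↔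
      a = M⁻¹ *ᵥ (F + C *ᵥ (A⁻¹ *ᵥ G)) - (M⁻¹ * (K + C * A⁻¹ * Cᵀ)) *ᵥ x
          - (M⁻¹ * (α • M + β • K)) *ᵥ b ∧
        y = A⁻¹ *ᵥ (Cᵀ *ᵥ x - G) := by
  have hconstraint : Cᵀ *ᵥ x - A *ᵥ y = G ↔ y = A⁻¹ *ᵥ (Cᵀ *ᵥ x - G) := by
    rw [← mulVec_eq_iff_eq_nonsing_inv_mulVec hA, sub_eq_iff_eq_add', eq_sub_iff_add_eq, eq_comm]
  rw [hconstraint, and_congr_left_iff]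
  rintro rfl
  rw [← mulVec_mulVec, ← mulVec_mulVec, ← mulVec_sub, ← mulVec_sub,
    ← mulVec_eq_iff_eq_nonsing_inv_mulVec hM]
  simp only [add_mulVec, smul_mulVec, mulVec_sub, ← mulVec_mulVec]
  constructor <;> intro h <;> [rw [← h]; rw [h]] <;> abel

theorem piezoSolves_iff {n k : ℕ} {M K : Matrix (Fin n) (Fin n) ℝ} {A : Matrix (Fin k) (Fin k) ℝ}
    {C : Matrix (Fin n) (Fin k) ℝ} {α β : ℝ} {f : ℝ → Fin n → ℝ} {g : ℝ → Fin k → ℝ}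
    {u u' u'' : ℝ → Fin n → ℝ} {φ : ℝ → Fin k → ℝ} {I : Set ℝ}
    (hM : IsUnit M.det) (hA : IsUnit A.det) :
    PiezoSolves M K A C α β f g u u' u'' φ I ↔
      ∀ t ∈ I, HasDerivAt u (u' t) t ∧ HasDerivAt u' (u'' t) t ∧
        u'' t = M⁻¹ *ᵥ (f t + C *ᵥ (A⁻¹ *ᵥ g t)) - (M⁻¹ * (K + C * A⁻¹ * Cᵀ)) *ᵥ u t
          - (M⁻¹ * (α • M + β • K)) *ᵥ u' t ∧
        φ t = A⁻¹ *ᵥ (Cᵀ *ᵥ u t - g t) := by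
  simp only [PiezoSolves, ← piezo_equations_iff hM hA, ← forall_and]

theorem piezo_discrete_exists_unique_general {n k : ℕ}
    (M K : Matrix (Fin n) (Fin n) ℝ) (A : Matrix (Fin k) (Fin k) ℝ)
    (C : Matrix (Fin n) (Fin k) ℝ) (α β : ℝ)
    (hM : M.PosDef) (hA : A.PosDef)
    (T : ℝ)
    (f : ℝ → Fin n → ℝ) (hf : Continuous f)
    (g : ℝ → Fin k → ℝ) (hg : Continuous g)
    (u₀ u₁ : Fin n → ℝ) :
    ∃ (u u' u'' : ℝ → Fin n → ℝ) (φ : ℝ → Fin k → ℝ),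
      (PiezoSolves M K A C α β f g u u' u'' φ (Icc 0 T) ∧
        ContinuousOn u'' (Icc 0 T) ∧ ContinuousOn φ (Icc 0 T) ∧
        u 0 = u₀ ∧ u' 0 = u₁) ∧
      ∀ (v v' v'' : ℝ → Fin n → ℝ) (ψ : ℝ → Fin k → ℝ),
        PiezoSolves M K A C α β f g v v' v'' ψ (Icc 0 T) →
        ContinuousOn v'' (Icc 0 T) → ContinuousOn ψ (Icc 0 T) →
        v 0 = u₀ → v' 0 = u₁ →
        ∀ t ∈ Icc (0 : ℝ) T, v t = u t ∧ ψ t = φ t := by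
  have hMdet : IsUnit M.det := (isUnit_iff_isUnit_det M).1 hM.isUnit
  have hAdet : IsUnit A.det := (isUnit_iff_isUnit_det A).1 hA.isUnit
  let S := LinearMap.toContinuousLinearMap (Matrix.toLin' (M⁻¹ * (K + C * A⁻¹ * Cᵀ)))
  let D := LinearMap.toContinuousLinearMap (Matrix.toLin' (M⁻¹ * (α • M + β • K)))
  let h t := M⁻¹ *ᵥ (f t + C *ᵥ (A⁻¹ *ᵥ g t))
  have hh : Continuous h :=
    continuous_const.matrix_mulVec (hf.add (continuous_const.matrix_mulVec
      (continuous_const.matrix_mulVec hg)))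
  obtain ⟨u, u', hu₀, hu₁, hu⟩ := exists_forall_hasDerivAt_second_order S D hh u₀ u₁
  have hu_cont : Continuous u := continuous_iff_continuousAt.2 fun t => (hu t).1.continuousAt
  have hu'_cont : Continuous u' := continuous_iff_continuousAt.2 fun t => (hu t).2.continuousAt
  refine ⟨u, u', fun t => h t - S (u t) - D (u' t), fun t => A⁻¹ *ᵥ (Cᵀ *ᵥ u t - g t),
    ⟨(piezoSolves_iff hMdet hAdet).2 fun t _ => ⟨(hu t).1, (hu t).2, rfl, rfl⟩,
      ((hh.sub (S.continuous.comp hu_cont)).sub (D.continuous.comp hu'_cont)).continuousOn,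
      (continuous_const.matrix_mulVec
        ((continuous_const.matrix_mulVec hu_cont).sub hg)).continuousOn,
      hu₀, hu₁⟩, ?_⟩
  intro v v' v'' ψ hv _ _ hv₀ hv₁ t ht
  have hv := (piezoSolves_iff hMdet hAdet).1 hv
  have hvu : EqOn v u (Icc 0 T) :=
    eqOn_Icc_of_hasDerivAt_second_order S D h
      (fun s hs => ⟨(hv s hs).1, (hv s hs).2.2.1 ▸ (hv s hs).2.1⟩) (fun s _ => hu s)
      (hv₀.trans hu₀.symm) (hv₁.trans hu₁.symm)
  exact ⟨hvu ht, by rw [(hv t ht).2.2.2, hvu ht]⟩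

/-- Existence and uniqueness of the Galerkin (discretized) solution: for continuous
forcing `f, g` and initial data `u₀, u₁` there is exactly one pair `(u, φ)` (twice
continuously differentiable `u`, continuous `φ`) solving the discretized piezoelectric
system on `[0, T]` with `u 0 = u₀`, `u' 0 = u₁`. -/
theorem piezo_discrete_exists_unique {n k : ℕ}
    (M K : Matrix (Fin n) (Fin n) ℝ) (A : Matrix (Fin k) (Fin k) ℝ)
    (C : Matrix (Fin n) (Fin k) ℝ) (α β : ℝ)
    (hM : M.PosDef) (hK : K.PosSemidef) (hA : A.PosDef)
    (hα : 0 ≤ α) (hβ : 0 ≤ β)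
    (T : ℝ) (hT : 0 < T)
    (f : ℝ → Fin n → ℝ) (hf : Continuous f)
    (g : ℝ → Fin k → ℝ) (hg : Continuous g)
    (u₀ u₁ : Fin n → ℝ) :
    ∃ (u u' u'' : ℝ → Fin n → ℝ) (φ : ℝ → Fin k → ℝ),
      (PiezoSolves M K A C α β f g u u' u'' φ (Icc 0 T) ∧
        ContinuousOn u'' (Icc 0 T) ∧ ContinuousOn φ (Icc 0 T) ∧
        u 0 = u₀ ∧ u' 0 = u₁) ∧
      ∀ (v v' v'' : ℝ → Fin n → ℝ) (ψ : ℝ → Fin k → ℝ),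
        PiezoSolves M K A C α β f g v v' v'' ψ (Icc 0 T) →
        ContinuousOn v'' (Icc 0 T) → ContinuousOn ψ (Icc 0 T) →
        v 0 = u₀ → v' 0 = u₁ →
        ∀ t ∈ Icc (0 : ℝ) T, v t = u t ∧ ψ t = φ t :=
  piezo_discrete_exists_unique_general M K A C α β hM hA T f hf g hg u₀ u₁
end

section
/- Under the discretized (Galerkin) piezoelectric setting: let T > 0, let f : ℝ → ℝⁿ be continuous, let g : ℝ → ℝᵏ be continuously differentiable, and let (u, φ) solve the discretized piezoelectric system on [0, T] with u twice continuously differentiable and φ continuously differentiable. Then for every t ∈ [0, T] the energy identity holds: ⟨M u'(t), u'(t)⟩ + ⟨K u(t), u(t)⟩ + ⟨A φ(t), φ(t)⟩ + 2α ∫₀ᵗ ⟨M u'(s), u'(s)⟩ ds + 2β ∫₀ᵗ ⟨K u'(s), u'(s)⟩ ds = ⟨M u'(0), u'(0)⟩ + ⟨K u(0), u(0)⟩ + ⟨A φ(0), φ(0)⟩ + 2 ∫₀ᵗ ⟨f(s), u'(s)⟩ ds − 2 ∫₀ᵗ ⟨g'(s), φ(s)⟩ ds. -/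
open MeasureTheory Matrix Set Filter

section Calculus

variable {ι κ : Type*} [Fintype ι]

theorem HasDerivAt.dotProduct {v w : ℝ → ι → ℝ} {v' w' : ι → ℝ} {t : ℝ}
    (hv : HasDerivAt v v' t) (hw : HasDerivAt w w' t) :
    HasDerivAt (fun s => v s ⬝ᵥ w s) (v' ⬝ᵥ w t + v t ⬝ᵥ w') t := by
  have h : ∀ i ∈ Finset.univ,
      HasDerivAt (fun s => v s i * w s i) (v' i * w t i + v t i * w' i) t :=
    fun i _ => (hasDerivAt_pi.1 hv i).mul (hasDerivAt_pi.1 hw i)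
  simpa [_root_.dotProduct, Finset.sum_add_distrib] using HasDerivAt.fun_sum h

theorem HasDerivAt.matrix_mulVec [Fintype κ] (M : Matrix κ ι ℝ) {v : ℝ → ι → ℝ} {v' : ι → ℝ}
    {t : ℝ} (hv : HasDerivAt v v' t) : HasDerivAt (fun s => M *ᵥ v s) (M *ᵥ v') t :=
  M.mulVecLin.toContinuousLinearMap.hasFDerivAt.comp_hasDerivAt t hv

theorem ContinuousOn.dotProduct {X : Type*} [TopologicalSpace X] {v w : X → ι → ℝ} {s : Set X}
    (hv : ContinuousOn v s) (hw : ContinuousOn w s) : ContinuousOn (fun x => v x ⬝ᵥ w x) s :=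
  (continuous_fst.dotProduct continuous_snd).comp_continuousOn (hv.prodMk hw)

theorem ContinuousOn.matrix_mulVec {X : Type*} [TopologicalSpace X] (M : Matrix κ ι ℝ)
    {v : X → ι → ℝ} {s : Set X} (hv : ContinuousOn v s) : ContinuousOn (fun x => M *ᵥ v x) s :=
  (continuous_const.matrix_mulVec continuous_id).comp_continuousOn hv

theorem Matrix.IsSymm.mulVec_dotProduct_comm {M : Matrix ι ι ℝ} (hM : M.IsSymm) (x y : ι → ℝ) :
    M *ᵥ x ⬝ᵥ y = M *ᵥ y ⬝ᵥ x := by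
  rw [dotProduct_comm, ← dotProduct_transpose_mulVec, hM.eq, dotProduct_comm]

theorem Matrix.IsSymm.hasDerivAt_mulVec_dotProduct_self {M : Matrix ι ι ℝ} (hM : M.IsSymm)
    {v : ℝ → ι → ℝ} {v' : ι → ℝ} {t : ℝ} (hv : HasDerivAt v v' t) :
    HasDerivAt (fun s => M *ᵥ v s ⬝ᵥ v s) (2 * (M *ᵥ v' ⬝ᵥ v t)) t :=
  ((hv.matrix_mulVec M).dotProduct hv).congr_deriv <| by
    rw [hM.mulVec_dotProduct_comm (v t), two_mul]

end Calculus

section Piezo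

variable {n k : ℕ} (M K : Matrix (Fin n) (Fin n) ℝ) (A : Matrix (Fin k) (Fin k) ℝ)
  {C : Matrix (Fin n) (Fin k) ℝ} (α β : ℝ) (f : ℝ → Fin n → ℝ) {g : ℝ → Fin k → ℝ}
  (g' : ℝ → Fin k → ℝ) (u : ℝ → Fin n → ℝ) (u' : ℝ → Fin n → ℝ) {u'' : ℝ → Fin n → ℝ}
  (φ : ℝ → Fin k → ℝ) {I : Set ℝ}

/-- Twice the stored (kinetic, elastic and electric) energy. -/
def piezoEnergy (t : ℝ) : ℝ :=
  M *ᵥ u' t ⬝ᵥ u' t + K *ᵥ u t ⬝ᵥ u t + A *ᵥ φ t ⬝ᵥ φ t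

/-- Power of the external loads minus the Rayleigh dissipation. -/
def piezoPower (t : ℝ) : ℝ :=
  f t ⬝ᵥ u' t - α * (M *ᵥ u' t ⬝ᵥ u' t) - β * (K *ᵥ u' t ⬝ᵥ u' t) - g' t ⬝ᵥ φ t

variable {M K A α β f g' u u' φ}

theorem PiezoSolves.constraint_deriv
    (hsol : PiezoSolves M K A C α β f g u u' u'' φ I) {s : ℝ} (hs : s ∈ I)
    (hI : UniqueDiffWithinAt ℝ I s) {φ's g's : Fin k → ℝ} (hφ : HasDerivAt φ φ's s)
    (hg : HasDerivAt g g's s) : Cᵀ *ᵥ u' s - A *ᵥ φ's = g's := by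
  have hconstraint : HasDerivWithinAt g (Cᵀ *ᵥ u' s - A *ᵥ φ's) I s :=
    (((hsol.1 s hs).matrix_mulVec Cᵀ).sub (hφ.matrix_mulVec A)).hasDerivWithinAt.congr
      (fun r hr => (hsol.2.2.2 r hr).symm) (hsol.2.2.2 s hs).symm
  exact hI.eq_deriv I hconstraint hg.hasDerivWithinAt

theorem PiezoSolves.hasDerivAt_piezoEnergy
    (hsol : PiezoSolves M K A C α β f g u u' u'' φ I) (hM : M.IsSymm) (hK : K.IsSymm)
    (hA : A.IsSymm) {s : ℝ} (hs : s ∈ I) {φ's : Fin k → ℝ} (hφ : HasDerivAt φ φ's s)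
    (hconstraint : Cᵀ *ᵥ u' s - A *ᵥ φ's = g' s) :
    HasDerivAt (piezoEnergy M K A u u' φ) (2 * piezoPower M K α β f g' u' φ s) s := by
  obtain ⟨hu, hu', hmotion, -⟩ := hsol
  refine (((hM.hasDerivAt_mulVec_dotProduct_self (hu' s hs)).add
    (hK.hasDerivAt_mulVec_dotProduct_self (hu s hs))).add
    (hA.hasDerivAt_mulVec_dotProduct_self hφ)).congr_deriv ?_
  have motion := congrArg (· ⬝ᵥ u' s) (hmotion s hs)
  have constraint := congrArg (· ⬝ᵥ φ s) hconstraint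
  simp only [add_dotProduct, sub_dotProduct, smul_dotProduct, smul_eq_mul] at motion constraint
  have coupling : Cᵀ *ᵥ u' s ⬝ᵥ φ s = C *ᵥ φ s ⬝ᵥ u' s := by
    rw [dotProduct_comm, dotProduct_transpose_mulVec, dotProduct_comm]
  rw [hK.mulVec_dotProduct_comm (u' s)]
  unfold piezoPower
  linarith

theorem continuousOn_piezoPower {S : Set ℝ} (hf : ContinuousOn f S) (hg' : ContinuousOn g' S)
    (hu' : ContinuousOn u' S) (hφ : ContinuousOn φ S) :
    ContinuousOn (piezoPower M K α β f g' u' φ) S :=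
  (((hf.dotProduct hu').sub (continuousOn_const.mul ((hu'.matrix_mulVec M).dotProduct hu'))).sub
    (continuousOn_const.mul ((hu'.matrix_mulVec K).dotProduct hu'))).sub (hg'.dotProduct hφ)

theorem integral_piezoPower {a b : ℝ} (hf : ContinuousOn f (uIcc a b))
    (hg' : ContinuousOn g' (uIcc a b)) (hu' : ContinuousOn u' (uIcc a b))
    (hφ : ContinuousOn φ (uIcc a b)) :
    ∫ s in a..b, piezoPower M K α β f g' u' φ s =
      (∫ s in a..b, f s ⬝ᵥ u' s) - α * (∫ s in a..b, M *ᵥ u' s ⬝ᵥ u' s)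
        - β * (∫ s in a..b, K *ᵥ u' s ⬝ᵥ u' s) - ∫ s in a..b, g' s ⬝ᵥ φ s := by
  have hload := (hf.dotProduct hu').intervalIntegrable (μ := volume)
  have hmass := ((hu'.matrix_mulVec M).dotProduct hu').intervalIntegrable (μ := volume)
  have hstiff := ((hu'.matrix_mulVec K).dotProduct hu').intervalIntegrable (μ := volume)
  have hcharge := (hg'.dotProduct hφ).intervalIntegrable (μ := volume)
  rw [← intervalIntegral.integral_const_mul, ← intervalIntegral.integral_const_mul,
    ← intervalIntegral.integral_sub hload (hmass.const_mul α),
    ← intervalIntegral.integral_sub (hload.sub (hmass.const_mul α)) (hstiff.const_mul β),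
    ← intervalIntegral.integral_sub
      ((hload.sub (hmass.const_mul α)).sub (hstiff.const_mul β)) hcharge]
  rfl

end Piezo

theorem piezo_discrete_energy_identity_general {n k : ℕ}
    (M K : Matrix (Fin n) (Fin n) ℝ) (A : Matrix (Fin k) (Fin k) ℝ)
    (C : Matrix (Fin n) (Fin k) ℝ) (α β : ℝ)
    (hM : M.PosDef) (hK : K.PosSemidef) (hA : A.PosDef)
    (T : ℝ) (hT : 0 < T)
    (f : ℝ → Fin n → ℝ) (hf : Continuous f)
    (g g' : ℝ → Fin k → ℝ) (hg : ∀ t, HasDerivAt g (g' t) t) (hg' : Continuous g')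
    (u u' u'' : ℝ → Fin n → ℝ) (φ φ' : ℝ → Fin k → ℝ)
    (hsol : PiezoSolves M K A C α β f g u u' u'' φ (Icc 0 T))
    (hφ : ∀ t ∈ Icc (0 : ℝ) T, HasDerivAt φ (φ' t) t) :
    ∀ t ∈ Icc (0 : ℝ) T,
      M.mulVec (u' t) ⬝ᵥ u' t + K.mulVec (u t) ⬝ᵥ u t + A.mulVec (φ t) ⬝ᵥ φ t
        + 2 * α * (∫ s in (0 : ℝ)..t, M.mulVec (u' s) ⬝ᵥ u' s)
        + 2 * β * (∫ s in (0 : ℝ)..t, K.mulVec (u' s) ⬝ᵥ u' s)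
      = M.mulVec (u' 0) ⬝ᵥ u' 0 + K.mulVec (u 0) ⬝ᵥ u 0 + A.mulVec (φ 0) ⬝ᵥ φ 0
        + 2 * (∫ s in (0 : ℝ)..t, f s ⬝ᵥ u' s)
        - 2 * (∫ s in (0 : ℝ)..t, g' s ⬝ᵥ φ s) := by
  intro t ht
  have hsub : uIcc 0 t ⊆ Icc 0 T := by
    rw [uIcc_of_le ht.1]
    exact Icc_subset_Icc_right ht.2
  have hderiv : ∀ s ∈ uIcc 0 t,
      HasDerivAt (piezoEnergy M K A u u' φ) (2 * piezoPower M K α β f g' u' φ s) s :=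
    fun s hs => hsol.hasDerivAt_piezoEnergy (isHermitian_iff_isSymm.1 hM.isHermitian)
      (isHermitian_iff_isSymm.1 hK.isHermitian) (isHermitian_iff_isSymm.1 hA.isHermitian)
      (hsub hs) (hφ s (hsub hs)) (hsol.constraint_deriv (hsub hs)
        (uniqueDiffOn_Icc hT s (hsub hs)) (hφ s (hsub hs)) (hg s))
  have hu'c := (HasDerivAt.continuousOn hsol.2.1).mono hsub
  have hφc := (HasDerivAt.continuousOn hφ).mono hsub
  have hpower := continuousOn_piezoPower (M := M) (K := K) (α := α) (β := β)
    hf.continuousOn hg'.continuousOn hu'c hφc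
  have hFTC := intervalIntegral.integral_eq_sub_of_hasDerivAt hderiv
    (hpower.const_mul 2 |>.intervalIntegrable)
  rw [intervalIntegral.integral_const_mul,
    integral_piezoPower hf.continuousOn hg'.continuousOn hu'c hφc] at hFTC
  unfold piezoEnergy at hFTC
  linarith

/-- Energy identity (Eq. (160) of the paper) for Galerkin solutions of the discretized
piezoelectric system. -/
theorem piezo_discrete_energy_identity {n k : ℕ}
    (M K : Matrix (Fin n) (Fin n) ℝ) (A : Matrix (Fin k) (Fin k) ℝ)
    (C : Matrix (Fin n) (Fin k) ℝ) (α β : ℝ)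
    (hM : M.PosDef) (hK : K.PosSemidef) (hA : A.PosDef)
    (hα : 0 ≤ α) (hβ : 0 ≤ β)
    (T : ℝ) (hT : 0 < T)
    (f : ℝ → Fin n → ℝ) (hf : Continuous f)
    (g g' : ℝ → Fin k → ℝ) (hg : ∀ t, HasDerivAt g (g' t) t) (hg' : Continuous g')
    (u u' u'' : ℝ → Fin n → ℝ) (φ φ' : ℝ → Fin k → ℝ)
    (hsol : PiezoSolves M K A C α β f g u u' u'' φ (Icc 0 T))
    (hu'' : ContinuousOn u'' (Icc 0 T))
    (hφ : ∀ t ∈ Icc (0 : ℝ) T, HasDerivAt φ (φ' t) t)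
    (hφ' : ContinuousOn φ' (Icc 0 T)) :
    ∀ t ∈ Icc (0 : ℝ) T,
      M.mulVec (u' t) ⬝ᵥ u' t + K.mulVec (u t) ⬝ᵥ u t + A.mulVec (φ t) ⬝ᵥ φ t
        + 2 * α * (∫ s in (0 : ℝ)..t, M.mulVec (u' s) ⬝ᵥ u' s)
        + 2 * β * (∫ s in (0 : ℝ)..t, K.mulVec (u' s) ⬝ᵥ u' s)
      = M.mulVec (u' 0) ⬝ᵥ u' 0 + K.mulVec (u 0) ⬝ᵥ u 0 + A.mulVec (φ 0) ⬝ᵥ φ 0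
        + 2 * (∫ s in (0 : ℝ)..t, f s ⬝ᵥ u' s)
        - 2 * (∫ s in (0 : ℝ)..t, g' s ⬝ᵥ φ s) :=
  piezo_discrete_energy_identity_general M K A C α β hM hK hA T hT f hf g g' hg hg' u u' u'' φ φ'
    hsol hφ
end

section
/- Under the discretized (Galerkin) piezoelectric setting: let T > 0 and let (u, φ) solve the discretized piezoelectric system on [0, T] with forcing f ≡ 0 and g ≡ 0, with u twice continuously differentiable and φ continuous, and with homogeneous initial data u(0) = 0 and u'(0) = 0. Then u(t) = 0 and φ(t) = 0 for all t ∈ [0, T]. -/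
open MeasureTheory Matrix Set Filter

namespace Matrix

variable {ι κ : Type*} [Fintype ι] [Fintype κ]

theorem hasDerivAt_dotProduct_mulVec (B : Matrix ι κ ℝ) {v : ℝ → ι → ℝ} {w : ℝ → κ → ℝ}
    {v' : ι → ℝ} {w' : κ → ℝ} {t : ℝ} (hv : HasDerivAt v v' t) (hw : HasDerivAt w w' t) :
    HasDerivAt (fun s => v s ⬝ᵥ B *ᵥ w s) (v' ⬝ᵥ B *ᵥ w t + v t ⬝ᵥ B *ᵥ w') t := by
  have hcoord : ∀ i, HasDerivAt (fun s => v s i * ∑ j, B i j * w s j)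
      (v' i * ∑ j, B i j * w t j + v t i * ∑ j, B i j * w' j) t := fun i =>
    (hasDerivAt_pi.1 hv i).mul
      (HasDerivAt.fun_sum fun j _ => (hasDerivAt_pi.1 hw j).const_mul (B i j))
  refine (HasDerivAt.fun_sum fun i (_ : i ∈ Finset.univ) => hcoord i).congr_deriv ?_
  simp [dotProduct, mulVec, Finset.sum_add_distrib]

theorem IsHermitian.dotProduct_mulVec_comm {S : Matrix ι ι ℝ} (hS : S.IsHermitian)
    (x y : ι → ℝ) : x ⬝ᵥ S *ᵥ y = y ⬝ᵥ S *ᵥ x := by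
  conv_lhs => rw [← hS.eq, conjTranspose_eq_transpose_of_trivial]
  exact dotProduct_transpose_mulVec S x y

theorem IsHermitian.hasDerivAt_dotProduct_mulVec_self {S : Matrix ι ι ℝ} (hS : S.IsHermitian)
    {x : ℝ → ι → ℝ} {x' : ι → ℝ} {t : ℝ} (hx : HasDerivAt x x' t) :
    HasDerivAt (fun s => x s ⬝ᵥ S *ᵥ x s) (2 * (x' ⬝ᵥ S *ᵥ x t)) t := by
  convert hasDerivAt_dotProduct_mulVec S hx hx using 1
  rw [hS.dotProduct_mulVec_comm (x t) x']
  ring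

theorem PosSemidef.dotProduct_mulVec_self_nonneg {S : Matrix ι ι ℝ} (hS : S.PosSemidef)
    (x : ι → ℝ) : 0 ≤ x ⬝ᵥ S *ᵥ x := by
  simpa using hS.dotProduct_mulVec_nonneg x

theorem PosDef.dotProduct_mulVec_self_pos {S : Matrix ι ι ℝ} (hS : S.PosDef) {x : ι → ℝ}
    (hx : x ≠ 0) : 0 < x ⬝ᵥ S *ᵥ x := by
  simpa using hS.dotProduct_mulVec_pos hx

theorem eq_inv_mulVec_of_mulVec_eq {R : Type*} [CommRing R] [DecidableEq ι] {A : Matrix ι ι R}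
    (hA : IsUnit A) {x y : ι → R} (h : A *ᵥ x = y) : x = A⁻¹ *ᵥ y := by
  let _ := hA.invertible
  exact (inv_mulVec_eq_vec h.symm).symm

end Matrix

section DampedOscillator

variable {ι : Type*} [Fintype ι] {M D S : Matrix ι ι ℝ} {u u' u'' : ℝ → ι → ℝ} {a b : ℝ}

def oscillatorEnergy (M S : Matrix ι ι ℝ) (u u' : ℝ → ι → ℝ) (t : ℝ) : ℝ :=
  u' t ⬝ᵥ M *ᵥ u' t + u t ⬝ᵥ S *ᵥ u t

theorem hasDerivAt_oscillatorEnergy (hM : M.IsHermitian) (hS : S.IsHermitian) {t : ℝ}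
    (hu : HasDerivAt u (u' t) t) (hu' : HasDerivAt u' (u'' t) t)
    (heq : M *ᵥ u'' t + D *ᵥ u' t + S *ᵥ u t = 0) :
    HasDerivAt (oscillatorEnergy M S u u') (-2 * (u' t ⬝ᵥ D *ᵥ u' t)) t := by
  refine ((hM.hasDerivAt_dotProduct_mulVec_self hu').add
    (hS.hasDerivAt_dotProduct_mulVec_self hu)).congr_deriv ?_
  have hpower : u' t ⬝ᵥ M *ᵥ u'' t + u' t ⬝ᵥ D *ᵥ u' t + u' t ⬝ᵥ S *ᵥ u t = 0 := by
    simpa only [dotProduct_add, dotProduct_zero] using congrArg (u' t ⬝ᵥ ·) heq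
  rw [hM.dotProduct_mulVec_comm (u'' t)]
  linarith

theorem antitoneOn_oscillatorEnergy (hM : M.IsHermitian) (hD : D.PosSemidef)
    (hS : S.IsHermitian) (hu : ∀ t ∈ Icc a b, HasDerivAt u (u' t) t)
    (hu' : ∀ t ∈ Icc a b, HasDerivAt u' (u'' t) t)
    (heq : ∀ t ∈ Icc a b, M *ᵥ u'' t + D *ᵥ u' t + S *ᵥ u t = 0) :
    AntitoneOn (oscillatorEnergy M S u u') (Icc a b) := by
  have hE t (ht : t ∈ Icc a b) :=
    hasDerivAt_oscillatorEnergy hM hS (hu t ht) (hu' t ht) (heq t ht)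
  refine antitoneOn_of_hasDerivWithinAt_nonpos (convex_Icc a b)
    (fun t ht => (hE t ht).continuousAt.continuousWithinAt)
    (fun t ht => (hE t (interior_subset ht)).hasDerivWithinAt) fun t _ => ?_
  nlinarith [hD.dotProduct_mulVec_self_nonneg (u' t)]

theorem eqOn_zero_of_dampedOscillator (hM : M.PosDef) (hD : D.PosSemidef) (hS : S.PosSemidef)
    (hu : ∀ t ∈ Icc a b, HasDerivAt u (u' t) t) (hu' : ∀ t ∈ Icc a b, HasDerivAt u' (u'' t) t)
    (heq : ∀ t ∈ Icc a b, M *ᵥ u'' t + D *ᵥ u' t + S *ᵥ u t = 0) (h0 : u a = 0) (h1 : u' a = 0) :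
    ∀ t ∈ Icc a b, u t = 0 := by
  have hanti := antitoneOn_oscillatorEnergy hM.isHermitian hD hS.isHermitian hu hu' heq
  have hvel : ∀ t ∈ Icc a b, u' t = 0 := by
    intro t ht
    by_contra hne
    have hdecay : oscillatorEnergy M S u u' t ≤ oscillatorEnergy M S u u' a :=
      hanti (left_mem_Icc.2 (ht.1.trans ht.2)) ht ht.1
    simp only [oscillatorEnergy, h0, h1, mulVec_zero, dotProduct_zero, add_zero] at hdecay
    linarith [hM.dotProduct_mulVec_self_pos hne, hS.dotProduct_mulVec_self_nonneg (u t)]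
  intro t ht
  rw [← h0]
  refine constant_of_has_deriv_right_zero
    (fun s hs => (hu s hs).continuousAt.continuousWithinAt) (fun s hs => ?_) t ht
  rw [← hvel s (Ico_subset_Icc_self hs)]
  exact (hu s (Ico_subset_Icc_self hs)).hasDerivWithinAt

end DampedOscillator

namespace PiezoSolves

variable {n k : ℕ} {M K : Matrix (Fin n) (Fin n) ℝ} {A : Matrix (Fin k) (Fin k) ℝ}
  {C : Matrix (Fin n) (Fin k) ℝ} {α β : ℝ} {u u' u'' : ℝ → Fin n → ℝ} {φ : ℝ → Fin k → ℝ}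
  {I : Set ℝ}

theorem potential_eq (hsol : PiezoSolves M K A C α β 0 0 u u' u'' φ I) (hA : A.PosDef)
    {t : ℝ} (ht : t ∈ I) : φ t = (A⁻¹ * Cᵀ) *ᵥ u t := by
  rw [← mulVec_mulVec]
  exact eq_inv_mulVec_of_mulVec_eq hA.isUnit (sub_eq_zero.1 (hsol.2.2.2 t ht)).symm

theorem condensed_eq (hsol : PiezoSolves M K A C α β 0 0 u u' u'' φ I) (hA : A.PosDef)
    {t : ℝ} (ht : t ∈ I) :
    M *ᵥ u'' t + (α • M + β • K) *ᵥ u' t + (K + C * A⁻¹ * Cᵀ) *ᵥ u t = 0 := by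
  have hmotion := hsol.2.2.1 t ht
  rw [hsol.potential_eq hA ht, mulVec_mulVec, ← Matrix.mul_assoc, Pi.zero_apply] at hmotion
  rw [← hmotion, add_mulVec, add_mulVec, smul_mulVec, smul_mulVec]
  abel

end PiezoSolves

theorem piezo_discrete_uniqueness_general {n k : ℕ}
    (M K : Matrix (Fin n) (Fin n) ℝ) (A : Matrix (Fin k) (Fin k) ℝ)
    (C : Matrix (Fin n) (Fin k) ℝ) (α β : ℝ)
    (hM : M.PosDef) (hK : K.PosSemidef) (hA : A.PosDef)
    (hα : 0 ≤ α) (hβ : 0 ≤ β)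
    (T : ℝ)
    (u u' u'' : ℝ → Fin n → ℝ) (φ : ℝ → Fin k → ℝ)
    (hsol : PiezoSolves M K A C α β (fun _ => 0) (fun _ => 0) u u' u'' φ (Icc 0 T))
    (h0 : u 0 = 0) (h1 : u' 0 = 0) :
    ∀ t ∈ Icc (0 : ℝ) T, u t = 0 ∧ φ t = 0 := by
  have hu0 : ∀ t ∈ Icc 0 T, u t = 0 := by
    refine eqOn_zero_of_dampedOscillator hM ((hM.posSemidef.smul hα).add (hK.smul hβ)) ?_
      hsol.1 hsol.2.1 (fun t ht => hsol.condensed_eq hA ht) h0 h1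
    simpa only [conjTranspose_eq_transpose_of_trivial] using
      hK.add (hA.inv.posSemidef.mul_mul_conjTranspose_same C)
  intro t ht
  exact ⟨hu0 t ht, by rw [hsol.potential_eq hA ht, hu0 t ht, mulVec_zero]⟩

/-- Uniqueness (Phase 4 of Theorem 1) at the Galerkin level: the only solution of the
discretized piezoelectric system with zero forcing and homogeneous initial data is the
trivial one. -/
theorem piezo_discrete_uniqueness {n k : ℕ}
    (M K : Matrix (Fin n) (Fin n) ℝ) (A : Matrix (Fin k) (Fin k) ℝ)
    (C : Matrix (Fin n) (Fin k) ℝ) (α β : ℝ)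
    (hM : M.PosDef) (hK : K.PosSemidef) (hA : A.PosDef)
    (hα : 0 ≤ α) (hβ : 0 ≤ β)
    (T : ℝ) (hT : 0 < T)
    (u u' u'' : ℝ → Fin n → ℝ) (φ : ℝ → Fin k → ℝ)
    (hsol : PiezoSolves M K A C α β (fun _ => 0) (fun _ => 0) u u' u'' φ (Icc 0 T))
    (hu'' : ContinuousOn u'' (Icc 0 T)) (hφ : ContinuousOn φ (Icc 0 T))
    (h0 : u 0 = 0) (h1 : u' 0 = 0) :
    ∀ t ∈ Icc (0 : ℝ) T, u t = 0 ∧ φ t = 0 :=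
  piezo_discrete_uniqueness_general M K A C α β hM hK hA hα hβ T u u' u'' φ hsol h0 h1
end
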